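/- Let G be a finite group, χ, ψ irreducible characters of G, and suppose α₁ is a linear irreducible constituent of χψ. Then the map β ↦ ᾱ₁·β gives a bijection between the set of distinct irreducible constituents of χψ and the set of distinct irreducible constituents of χχ̄, preserving multiplicities; in particular the number of distinct irreducible constituents of χψ equals that of χχ̄. -/

import Mathlib

open scoped BigOperators

noncomputable section

/-- Inner product of class functions on a finite group. -/
def charInner (G : Type*) [Group G] [Finite G] (φ ψ : G → ℂ) : ℂ :=
  (Nat.card G : ℂ)⁻¹ * ∑ᶠ g : G, φ g * (starRingEnd ℂ) (ψ g)

/-- `χ` is the character of some finite-dimensional complex representation. -/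
def IsChar (G : Type*) [Group G] (χ : G → ℂ) : Prop :=
  ∃ (n : ℕ) (ρ : G →* Matrix.GeneralLinearGroup (Fin n) ℂ),
    ∀ g : G, χ g = Matrix.trace ((ρ g : Matrix (Fin n) (Fin n) ℂ))

/-- `χ` is an irreducible character. -/
def IsIrrChar (G : Type*) [Group G] [Finite G] (χ : G → ℂ) : Prop :=
  IsChar G χ ∧ charInner G χ χ = 1

/-- The kernel of a character, as a set. -/
def charKer {G : Type*} [Group G] (χ : G → ℂ) : Set G := {g | χ g = χ 1}

/-- The complex conjugate character. -/
def conjChar {G : Type*} (χ : G → ℂ) : G → ℂ := fun g => (starRingEnd ℂ) (χ g)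

/-- Restriction of a character to a subgroup. -/
def res {G : Type*} [Group G] (H : Subgroup G) (χ : G → ℂ) : H → ℂ := fun h => χ (h : G)

/-! Irreducible characters with nonzero inner product are equal (Schur orthogonality, taken from
`Representation.char_orthonormal` once the norm condition `[χ, χ] = 1` is turned into
irreducibility via Maschke). Hence `[χψ, α₁] = [χ, α₁ψ̄] ≠ 0` forces `χ = α₁ψ̄`, so that
`χψ = α₁ψ̄ψ = α₁χχ̄`. Since `ᾱ₁ = α₁⁻¹` pointwise, `[α₁Φ, β] = [Φ, ᾱ₁β]` for every class
function `Φ`, and multiplication by `ᾱ₁` permutes the irreducible characters. -/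

open Module

theorem IsSemisimpleModule.isSimpleModule_of_finrank_end_eq_one {k R M : Type*} [Field k]
    [Ring R] [Algebra k R] [AddCommGroup M] [Module R M] [Module k M] [IsScalarTower k R M]
    [IsSemisimpleModule R M] (h : finrank k (M →ₗ[R] M) = 1) : IsSimpleModule R M := by
  have : Nontrivial (M →ₗ[R] M) := Module.nontrivial_of_finrank_eq_succ h
  have : Nontrivial M := by
    by_contra hM
    rw [not_nontrivial_iff_subsingleton] at hM
    exact (not_subsingleton (M →ₗ[R] M)) inferInstance
  refine (isSimpleModule_iff R M).2 ⟨fun N => ?_⟩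
  obtain ⟨N', hNN'⟩ := exists_isCompl N
  -- the projection onto `N` along `N'` is a scalar `c`, so `N = ⊥` or `N' = ⊥`
  obtain ⟨c, hc⟩ := (finrank_eq_one_iff_of_nonzero' (LinearMap.id : M →ₗ[R] M) one_ne_zero).mp h
    (N.projection N' hNN')
  have hN : ∀ x ∈ N, c • x = x := fun x hx => by
    simpa [Submodule.projection_apply_of_mem_left hNN' hx] using congr($hc x)
  have hN' : ∀ x ∈ N', c • x = 0 := fun x hx => by
    simpa [Submodule.projection_apply_right hNN' ⟨x, hx⟩] using congr($hc x)
  by_cases hc0 : c = 0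
  · left
    exact (Submodule.eq_bot_iff N).2 fun x hx => by simpa [hc0] using (hN x hx).symm
  · right
    have : N' = ⊥ := (Submodule.eq_bot_iff N').2 fun x hx => by simpa [hc0] using hN' x hx
    simpa [this] using hNN'.sup_eq_top

namespace Representation

variable {k G V : Type*} [Field k] [Group G] [AddCommGroup V] [Module k V]

theorem isIrreducible_of_finrank_intertwiningMap_eq_one [Finite G] [NeZero (Nat.card G : k)]
    (ρ : Representation k G V) (h : finrank k (IntertwiningMap ρ ρ) = 1) : IsIrreducible ρ := by
  rw [irreducible_iff_isSimpleModule_asModule]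
  exact IsSemisimpleModule.isSimpleModule_of_finrank_end_eq_one (k := k)
    ((IntertwiningMap.equivLinearMapAsModule ρ ρ).finrank_eq ▸ h)

theorem isIrreducible_of_card_inv_mul_sum_char_mul_char_eq_one [Fintype G] [CharZero k]
    [FiniteDimensional k V] (ρ : Representation k G V)
    (h : (Nat.card G : k)⁻¹ * ∑ g : G, ρ.character g * ρ.character g⁻¹ = 1) :
    IsIrreducible ρ := by
  have := invertibleOfNonzero (NeZero.ne (Nat.card G : k))
  refine ρ.isIrreducible_of_finrank_intertwiningMap_eq_one (Nat.cast_injective (R := k) ?_)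
  rw [← card_inv_mul_sum_char_mul_char_eq_finrank, h, Nat.cast_one]

end Representation

open Matrix ComplexOrder in
theorem MonoidHom.trace_inv_eq_star_trace {G ι : Type*} [Group G] [Finite G] [Fintype ι]
    [DecidableEq ι] (ρ : G →* Matrix ι ι ℂ) (g : G) :
    (ρ g⁻¹).trace = star (ρ g).trace := by
  cases nonempty_fintype G
  -- a `ρ`-invariant positive definite Hermitian form makes `ρ g⁻¹` conjugate to `(ρ g)ᴴ`
  have hH : (∑ h : G, (ρ h)ᴴ * ρ h).PosDef := by
    classical
    rw [← Finset.add_sum_erase _ _ (Finset.mem_univ 1), map_one, conjTranspose_one, one_mul]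
    exact PosDef.one.add_posSemidef
      (posSemidef_sum _ fun h _ => posSemidef_conjTranspose_mul_self (ρ h))
  set H := ∑ h : G, (ρ h)ᴴ * ρ h
  have hdet : IsUnit H.det := (isUnit_iff_isUnit_det H).1 hH.isUnit
  have hinv : (ρ g)ᴴ * H * ρ g = H := by
    simp only [H, Finset.mul_sum, Finset.sum_mul]
    exact Fintype.sum_equiv (Equiv.mulRight g) _ _ fun h => by
      simp [Matrix.mul_assoc, conjTranspose_mul]
  have hrel : (ρ g)ᴴ * H = H * ρ g⁻¹ := by
    conv_rhs => rw [← hinv]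
    rw [Matrix.mul_assoc, ← map_mul ρ, mul_inv_cancel, map_one, Matrix.mul_one]
  calc (ρ g⁻¹).trace = (H⁻¹ * (H * ρ g⁻¹)).trace := by
        rw [← Matrix.mul_assoc, nonsing_inv_mul _ hdet, Matrix.one_mul]
    _ = ((ρ g)ᴴ * H * H⁻¹).trace := by rw [← hrel, trace_mul_comm]
    _ = star (ρ g).trace := by
        rw [Matrix.mul_assoc, mul_nonsing_inv _ hdet, Matrix.mul_one, trace_conjTranspose]

section

variable {G : Type*}

theorem conjChar_mul (φ ψ : G → ℂ) : conjChar (φ * ψ) = conjChar φ * conjChar ψ := by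
  funext g
  simp [conjChar]

theorem conjChar_conjChar (φ : G → ℂ) : conjChar (conjChar φ) = φ := by
  funext g
  simp [conjChar]

variable [Group G]

theorem isChar_character {V : Type*} [AddCommGroup V] [Module ℂ V] [FiniteDimensional ℂ V]
    (ρ : Representation ℂ G V) : IsChar G ρ.character := by
  let b := Module.finBasis ℂ V
  exact ⟨finrank ℂ V, (Units.map (LinearMap.toMatrixAlgEquiv b).toMonoidHom).comp ρ.toHomUnits,
    fun g => LinearMap.trace_eq_matrix_trace ℂ b (ρ g)⟩

theorem IsChar.exists_representation {χ : G → ℂ} (h : IsChar G χ) :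
    ∃ (n : ℕ) (ρ : Representation ℂ G (Fin n → ℂ)), ρ.character = χ := by
  obtain ⟨n, ρ, hρ⟩ := h
  exact ⟨n, (Matrix.toLinAlgEquiv' (R := ℂ) (n := Fin n)).toMonoidHom.comp
    ((Units.coeHom _).comp ρ),
    funext fun g => (Matrix.trace_toLin'_eq _).trans (hρ g).symm⟩

theorem IsChar.conjChar_eq [Finite G] {χ : G → ℂ} (h : IsChar G χ) :
    conjChar χ = fun g => χ g⁻¹ := by
  obtain ⟨n, ρ, hρ⟩ := h
  funext g
  simpa [conjChar, hρ] using
    (((Units.coeHom _).comp ρ).trace_inv_eq_star_trace g).symm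

theorem IsChar.mul {χ ψ : G → ℂ} (hχ : IsChar G χ) (hψ : IsChar G ψ) : IsChar G (χ * ψ) := by
  obtain ⟨n, ρ, rfl⟩ := hχ.exists_representation
  obtain ⟨m, σ, rfl⟩ := hψ.exists_representation
  simpa using isChar_character (ρ.tprod σ)

theorem IsChar.conjChar [Finite G] {χ : G → ℂ} (h : IsChar G χ) : IsChar G (conjChar χ) := by
  rw [h.conjChar_eq]
  obtain ⟨n, ρ, rfl⟩ := h.exists_representation
  exact (funext ρ.char_dual : ρ.dual.character = _) ▸ isChar_character ρ.dual

theorem charInner_eq_sum [Fintype G] (φ ψ : G → ℂ) :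
    charInner G φ ψ = (Nat.card G : ℂ)⁻¹ * ∑ g, φ g * starRingEnd ℂ (ψ g) := by
  rw [charInner, finsum_eq_sum_of_fintype]

theorem charInner_mul_left [Finite G] (u φ ψ : G → ℂ) :
    charInner G (u * φ) ψ = charInner G φ (conjChar u * ψ) := by
  cases nonempty_fintype G
  simp only [charInner_eq_sum, conjChar, Pi.mul_apply, map_mul, Complex.conj_conj]
  congr 1
  exact Finset.sum_congr rfl fun g _ => by ring

theorem charInner_conjChar [Finite G] (φ ψ : G → ℂ) :
    charInner G (conjChar φ) (conjChar ψ) = charInner G ψ φ := by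
  cases nonempty_fintype G
  simp only [charInner_eq_sum, conjChar, Complex.conj_conj]
  congr 1
  exact Finset.sum_congr rfl fun g _ => mul_comm _ _

theorem IsChar.charInner_eq [Fintype G] {θ : G → ℂ} (hθ : IsChar G θ) (φ : G → ℂ) :
    charInner G φ θ = (Nat.card G : ℂ)⁻¹ * ∑ g, φ g * θ g⁻¹ := by
  rw [charInner_eq_sum]
  refine congrArg _ (Finset.sum_congr rfl fun g _ => ?_)
  rw [← congrFun hθ.conjChar_eq g]
  rfl

theorem IsIrrChar.conjChar [Finite G] {χ : G → ℂ} (h : IsIrrChar G χ) :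
    IsIrrChar G (conjChar χ) :=
  ⟨h.1.conjChar, by rw [charInner_conjChar, h.2]⟩

theorem IsIrrChar.eq_of_charInner_ne_zero [Finite G] {χ θ : G → ℂ} (hχ : IsIrrChar G χ)
    (hθ : IsIrrChar G θ) (h : charInner G χ θ ≠ 0) : χ = θ := by
  cases nonempty_fintype G
  obtain ⟨n, ρ, rfl⟩ := hχ.1.exists_representation
  obtain ⟨m, σ, rfl⟩ := hθ.1.exists_representation
  have hρ := ρ.isIrreducible_of_card_inv_mul_sum_char_mul_char_eq_one
    (hχ.1.charInner_eq _ ▸ hχ.2)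
  have hσ := σ.isIrreducible_of_card_inv_mul_sum_char_mul_char_eq_one
    (hθ.1.charInner_eq _ ▸ hθ.2)
  have := invertibleOfNonzero (NeZero.ne (Nat.card G : ℂ))
  rw [hθ.1.charInner_eq, ρ.char_orthonormal σ] at h
  split_ifs at h with hiso
  · exact (Representation.char_iso hiso.some).symm
  · exact absurd rfl h

def IsLinearChar (G : Type*) [Group G] (α : G → ℂ) : Prop :=
  IsChar G α ∧ α 1 = 1

theorem IsLinearChar.map_mul {α : G → ℂ} (hα : IsLinearChar G α) (g h : G) :
    α (g * h) = α g * α h := by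
  obtain ⟨⟨n, ρ, hρ⟩, h1⟩ := hα
  obtain rfl : n = 1 := by
    rw [hρ, map_one, Units.val_one, Matrix.trace_one, Fintype.card_fin] at h1
    exact_mod_cast h1
  simp [hρ, Matrix.trace_fin_one, Matrix.mul_apply]

theorem IsLinearChar.conjChar_mul_self [Finite G] {α : G → ℂ} (hα : IsLinearChar G α) :
    conjChar α * α = 1 := by
  funext g
  rw [hα.1.conjChar_eq, Pi.mul_apply, ← hα.map_mul, inv_mul_cancel, hα.2, Pi.one_apply]

theorem IsLinearChar.conjChar [Finite G] {α : G → ℂ} (hα : IsLinearChar G α) :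
    IsLinearChar G (conjChar α) :=
  ⟨hα.1.conjChar, by simp [_root_.conjChar, hα.2]⟩

theorem IsIrrChar.linearChar_mul [Finite G] {α β : G → ℂ} (hα : IsLinearChar G α)
    (hβ : IsIrrChar G β) : IsIrrChar G (α * β) := by
  refine ⟨hα.1.mul hβ.1, ?_⟩
  rw [charInner_mul_left, ← mul_assoc, hα.conjChar_mul_self, one_mul, hβ.2]

def irrConstituents (G : Type*) [Group G] [Finite G] (Φ : G → ℂ) : Set (G → ℂ) :=
  {β | IsIrrChar G β ∧ charInner G Φ β ≠ 0}

theorem bijOn_conjChar_mul_irrConstituents [Finite G] {α : G → ℂ} (hα : IsLinearChar G α)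
    (Φ : G → ℂ) :
    Set.BijOn (conjChar α * ·) (irrConstituents G (α * Φ)) (irrConstituents G Φ) := by
  have hleft (γ : G → ℂ) : conjChar α * (α * γ) = γ := by
    rw [← mul_assoc, hα.conjChar_mul_self, one_mul]
  have hright (β : G → ℂ) : α * (conjChar α * β) = β := by
    rw [← mul_assoc, mul_comm α, hα.conjChar_mul_self, one_mul]
  refine Set.InvOn.bijOn (f' := (α * ·)) ⟨fun β _ => hright β, fun γ _ => hleft γ⟩ ?_ ?_
  · rintro β ⟨hβ, hne⟩
    exact ⟨hβ.linearChar_mul hα.conjChar, by rwa [← charInner_mul_left]⟩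
  · rintro γ ⟨hγ, hne⟩
    exact ⟨hγ.linearChar_mul hα, by rwa [charInner_mul_left, hleft]⟩

end

theorem stmt_4 {G : Type*} [Group G] [Finite G] (χ ψ α₁ : G → ℂ)
    (hχ : IsIrrChar G χ) (hψ : IsIrrChar G ψ) (hα : IsIrrChar G α₁)
    (hαlin : α₁ 1 = 1) (hcon : charInner G (χ * ψ) α₁ ≠ 0) :
    Set.BijOn (fun β => conjChar α₁ * β)
      {β | IsIrrChar G β ∧ charInner G (χ * ψ) β ≠ 0}
      {γ | IsIrrChar G γ ∧ charInner G (χ * conjChar χ) γ ≠ 0} ∧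
    (∀ β : G → ℂ, charInner G (χ * ψ) β = charInner G (χ * conjChar χ) (conjChar α₁ * β)) ∧
    {β | IsIrrChar G β ∧ charInner G (χ * ψ) β ≠ 0}.ncard =
      {γ | IsIrrChar G γ ∧ charInner G (χ * conjChar χ) γ ≠ 0}.ncard := by
  have hαl : IsLinearChar G α₁ := ⟨hα.1, hαlin⟩
  have hχ_eq : χ = α₁ * conjChar ψ := by
    refine hχ.eq_of_charInner_ne_zero (hψ.conjChar.linearChar_mul hαl) ?_
    rwa [mul_comm α₁, ← charInner_mul_left, mul_comm]
  have hprod : χ * ψ = α₁ * (χ * conjChar χ) := by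
    rw [hχ_eq, conjChar_mul, conjChar_conjChar]
    linear_combination (-(α₁ * conjChar ψ * ψ)) * hαl.conjChar_mul_self
  have hbij := bijOn_conjChar_mul_irrConstituents hαl (χ * conjChar χ)
  rw [← hprod] at hbij
  exact ⟨hbij, fun β => by rw [hprod, charInner_mul_left], hbij.ncard_eq⟩
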